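/- arXiv:2012.11752 — 4 statements merged into one kernel-verified Lean document; each statement's English description precedes it below -/
import Mathlib

section
/- Let m ≥ 3 and let 𝟙_v denote the indicator function of a vertex v (𝟙_v(v) = 1 and 𝟙_v(u) = 0 for u ≠ v). For all vertices v and w of C_m^N, if ((A_- ∘ A_+ − A_+ ∘ A_-) 𝟙_v)(w) ≠ 0, then d_k(w) = d_k(v) for every coordinate k ∈ Fin N; that is, the commutator C = A_-A_+ − A_+A_- is supported on pairs of vertices having equal level vectors. -/
open Finset

/-- The standard generator `e_k` of `(ZMod m)^N`: equal to `1` in coordinate `k`,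
`0` elsewhere. -/
def eV (N m : ℕ) (k : Fin N) : Fin N → ZMod m :=
  fun j => if j = k then 1 else 0

/-- Adjacency in the Cayley graph `C_m^N`: `v ∼ w` iff `w = v + e_k` or `w = v - e_k`
for some coordinate `k`. -/
def adj (N m : ℕ) (v w : Fin N → ZMod m) : Prop :=
  ∃ k : Fin N, w = v + eV N m k ∨ w = v - eV N m k

/-- The `k`-th level of a vertex: `d_k(v) = min((v k).val, m - (v k).val)`. -/
def lev (N m : ℕ) (v : Fin N → ZMod m) (k : Fin N) : ℕ :=
  min ((v k).val) (m - (v k).val)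

/-- Path distance of a vertex to the origin: `d(v) = Σ_k d_k(v)`. -/
def distO (N m : ℕ) (v : Fin N → ZMod m) : ℕ :=
  ∑ k : Fin N, lev N m v k

open Classical in
/-- Adjacency operator: `(A f)(v) = Σ_{w ∼ v} f(w)`. -/
noncomputable def Aop (N m : ℕ) [NeZero m] (f : (Fin N → ZMod m) → ℂ) :
    (Fin N → ZMod m) → ℂ :=
  fun v => ∑ w : Fin N → ZMod m, if adj N m v w then f w else 0

open Classical in
/-- Outer adjacency: `(A₊ f)(v) = Σ_{w ∼ v, d(w) < d(v)} f(w)`. -/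
noncomputable def Aplus (N m : ℕ) [NeZero m] (f : (Fin N → ZMod m) → ℂ) :
    (Fin N → ZMod m) → ℂ :=
  fun v => ∑ w : Fin N → ZMod m,
    if adj N m v w ∧ distO N m w < distO N m v then f w else 0

open Classical in
/-- Inner adjacency: `(A₋ f)(v) = Σ_{w ∼ v, d(w) > d(v)} f(w)`. -/
noncomputable def Aminus (N m : ℕ) [NeZero m] (f : (Fin N → ZMod m) → ℂ) :
    (Fin N → ZMod m) → ℂ :=
  fun v => ∑ w : Fin N → ZMod m,
    if adj N m v w ∧ distO N m v < distO N m w then f w else 0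

open Classical in
/-- Neutral adjacency: `(A₀ f)(v) = Σ_{w ∼ v, d(w) = d(v)} f(w)`. -/
noncomputable def Azero (N m : ℕ) [NeZero m] (f : (Fin N → ZMod m) → ℂ) :
    (Fin N → ZMod m) → ℂ :=
  fun v => ∑ w : Fin N → ZMod m,
    if adj N m v w ∧ distO N m w = distO N m v then f w else 0

/-- The `k`-reflection `ṽ_k` of a vertex: negate the `k`-th coordinate. -/
def reflV (N m : ℕ) (k : Fin N) (v : Fin N → ZMod m) : Fin N → ZMod m :=
  Function.update v k (-(v k))

/-- Level-one reflection sum: `(R₁ f)(v) = Σ_{k : d_k(v) = 1} f(ṽ_k)`. -/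
noncomputable def R1 (N m : ℕ) (f : (Fin N → ZMod m) → ℂ) :
    (Fin N → ZMod m) → ℂ :=
  fun v => ∑ k ∈ Finset.univ.filter (fun k => lev N m v k = 1), f (reflV N m k v)

/-- Number of coordinates of `v` at level `ℓ`. -/
def cardLev (N m : ℕ) (v : Fin N → ZMod m) (ℓ : ℕ) : ℕ :=
  (Finset.univ.filter (fun k => lev N m v k = ℓ)).card

open Classical in
/-- Indicator function of a single vertex. -/
noncomputable def indV (N m : ℕ) (v : Fin N → ZMod m) : (Fin N → ZMod m) → ℂ :=
  fun u => if u = v then 1 else 0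

/-! If the level vectors of `v` and `w` differ, `u ↦ v + w - u` is a bijection between the common
neighbours of `v` and `w` farther from the origin than both and those closer than both, which are
what `A₋A₊ 𝟙_v` and `A₊A₋ 𝟙_v` count at `w`. The path `w ∼ u ∼ v` moves along coordinates `j`
and `k`. If `j ≠ k`, `v + w - u` is the fourth corner of the square and every coordinate of `u`
is one of `v`, `w`, so `d(v + w - u) + d(u) = d(v) + d(w)`. If `j = k`, then `v` and `w` differ in
coordinate `k` only, and since `d` changes by at most one along an edge, `d(v) = d(w)`, which
forces equal level vectors. -/

section Adjacency

variable {N m : ℕ}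

lemma adj_symm {x y : Fin N → ZMod m} (h : adj N m x y) : adj N m y x := by
  obtain ⟨k, rfl | rfl⟩ := h
  · exact ⟨k, Or.inr (add_sub_cancel_right x _).symm⟩
  · exact ⟨k, Or.inl (sub_add_cancel x _).symm⟩

lemma adj_of_sub_eq_sub {x y x' y' : Fin N → ZMod m} (hsub : y' - x' = y - x)
    (h : adj N m x y) : adj N m x' y' := by
  have hy' : y' = x' + (y - x) := by rw [← hsub, add_sub_cancel]
  obtain ⟨k, rfl | rfl⟩ := h
  · exact ⟨k, Or.inl (by rw [hy']; abel)⟩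
  · exact ⟨k, Or.inr (by rw [hy']; abel)⟩

lemma exists_forall_ne_eq_of_adj {x y : Fin N → ZMod m} (h : adj N m x y) :
    ∃ k, ∀ i, i ≠ k → y i = x i := by
  obtain ⟨k, rfl | rfl⟩ := h <;> exact ⟨k, fun i hi => by simp [eV, hi]⟩

end Adjacency

section Distance

variable {N m : ℕ}

lemma lev_eq_natAbs_valMinAbs [NeZero m] (v : Fin N → ZMod m) (k : Fin N) :
    lev N m v k = (v k).valMinAbs.natAbs :=
  (ZMod.valMinAbs_natAbs_eq_min (v k)).symm

lemma distO_add_le [NeZero m] (x y : Fin N → ZMod m) :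
    distO N m (x + y) ≤ distO N m x + distO N m y := by
  rw [distO, distO, distO, ← sum_add_distrib]
  refine sum_le_sum fun i _ => ?_
  simp only [lev_eq_natAbs_valMinAbs, Pi.add_apply]
  exact (ZMod.natAbs_valMinAbs_add_le _ _).trans (Int.natAbs_add_le _ _)

@[simp]
lemma distO_neg [NeZero m] (x : Fin N → ZMod m) : distO N m (-x) = distO N m x := by
  simp [distO, lev_eq_natAbs_valMinAbs]

lemma distO_eV_le (k : Fin N) : distO N m (eV N m k) ≤ 1 := by
  rw [distO, sum_eq_single k (fun i _ hi => by simp [lev, eV, hi]) (by simp)]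
  calc lev N m (eV N m k) k ≤ (1 : ZMod m).val := by simp [lev, eV]
    _ ≤ 1 := by rw [ZMod.val_one_eq_one_mod]; exact Nat.mod_le 1 m

lemma distO_le_add_one_of_adj [NeZero m] {x y : Fin N → ZMod m} (h : adj N m x y) :
    distO N m y ≤ distO N m x + 1 := by
  obtain ⟨k, rfl | rfl⟩ := h
  · exact (distO_add_le _ _).trans (by grw [distO_eV_le])
  · rw [sub_eq_add_neg]
    exact (distO_add_le _ _).trans (by grw [distO_neg, distO_eV_le])

lemma lev_eq_of_forall_ne_eq_of_distO_eq {v w : Fin N → ZMod m} {k : Fin N}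
    (hoff : ∀ i, i ≠ k → v i = w i) (hd : distO N m v = distO N m w) (i : Fin N) :
    lev N m v i = lev N m w i := by
  have hlev : ∀ i, i ≠ k → lev N m v i = lev N m w i := fun i hi => by rw [lev, lev, hoff i hi]
  have hk : lev N m v k = lev N m w k := by
    rw [distO, distO, ← add_sum_erase _ _ (mem_univ k), ← add_sum_erase _ _ (mem_univ k),
      sum_congr rfl fun i hi => hlev i (ne_of_mem_erase hi)] at hd
    exact Nat.add_right_cancel hd
  by_cases hi : i = k
  · rw [hi, hk]
  · exact hlev i hi

lemma distO_sub_add_distO {u v w : Fin N → ZMod m} (hu : ∀ i, u i = v i ∨ u i = w i) :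
    distO N m (v + w - u) + distO N m u = distO N m v + distO N m w := by
  simp only [distO, ← sum_add_distrib]
  refine sum_congr rfl fun i _ => ?_
  rcases hu i with h | h <;> simp [lev, h, add_comm]

end Distance

section CommonNeighbours

variable {N m : ℕ}

lemma forall_eq_or_eq_or_exists_forall_ne_eq {u v w : Fin N → ZMod m} (hwu : adj N m w u)
    (huv : adj N m u v) :
    (∀ i, u i = v i ∨ u i = w i) ∨ ∃ k, ∀ i, i ≠ k → v i = w i := by
  obtain ⟨j, hj⟩ := exists_forall_ne_eq_of_adj hwu
  obtain ⟨k, hk⟩ := exists_forall_ne_eq_of_adj huv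
  by_cases hjk : j = k
  · exact Or.inr ⟨k, fun i hi => by rw [hk i hi, hj i (hjk ▸ hi)]⟩
  · refine Or.inl fun i => ?_
    by_cases hij : i = j
    · exact Or.inl (hk i (hij ▸ hjk)).symm
    · exact Or.inr (hj i hij)

lemma lev_eq_or_forall_eq_or_eq [NeZero m] {u v w : Fin N → ZMod m} (hwu : adj N m w u)
    (huv : adj N m u v)
    (hd : distO N m w < distO N m u ∧ distO N m v < distO N m u ∨
      distO N m u < distO N m w ∧ distO N m u < distO N m v) :
    (∀ i, lev N m v i = lev N m w i) ∨ ∀ i, u i = v i ∨ u i = w i := by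
  refine (forall_eq_or_eq_or_exists_forall_ne_eq hwu huv).symm.imp (fun ⟨k, hoff⟩ => ?_) id
  have := distO_le_add_one_of_adj hwu
  have := distO_le_add_one_of_adj (adj_symm hwu)
  have := distO_le_add_one_of_adj huv
  have := distO_le_add_one_of_adj (adj_symm huv)
  exact lev_eq_of_forall_ne_eq_of_distO_eq hoff (by omega)

end CommonNeighbours

section Operators

open Classical

variable {N m : ℕ} [NeZero m]

lemma Aplus_indV_apply (v u : Fin N → ZMod m) :
    Aplus N m (indV N m v) u = if adj N m u v ∧ distO N m v < distO N m u then 1 else 0 := by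
  rw [Aplus, sum_eq_single v] <;> simp +contextual [indV]

lemma Aminus_indV_apply (v u : Fin N → ZMod m) :
    Aminus N m (indV N m v) u = if adj N m u v ∧ distO N m u < distO N m v then 1 else 0 := by
  rw [Aminus, sum_eq_single v] <;> simp +contextual [indV]

lemma Aminus_Aplus_indV_apply (v w : Fin N → ZMod m) :
    Aminus N m (Aplus N m (indV N m v)) w =
      #{u | (adj N m w u ∧ distO N m w < distO N m u) ∧
        adj N m u v ∧ distO N m v < distO N m u} := by
  simp only [Aminus, Aplus_indV_apply, ← ite_and, ← sum_boole]

lemma Aplus_Aminus_indV_apply (v w : Fin N → ZMod m) :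
    Aplus N m (Aminus N m (indV N m v)) w =
      #{u | (adj N m w u ∧ distO N m u < distO N m w) ∧
        adj N m u v ∧ distO N m u < distO N m v} := by
  simp only [Aplus, Aminus_indV_apply, ← ite_and, ← sum_boole]

end Operators

theorem commutator_equal_level_vectors_general (N m : ℕ) [NeZero m]
    (v w : Fin N → ZMod m)
    (h : Aminus N m (Aplus N m (indV N m v)) w
        - Aplus N m (Aminus N m (indV N m v)) w ≠ 0) :
    ∀ k : Fin N, lev N m w k = lev N m v k := by
  by_contra hlev
  refine h (sub_eq_zero.2 ?_)
  rw [Aminus_Aplus_indV_apply, Aplus_Aminus_indV_apply, Nat.cast_inj]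
  refine card_bij' (fun u _ => v + w - u) (fun u _ => v + w - u) ?_ ?_
    (fun u _ => sub_sub_cancel _ u) (fun u _ => sub_sub_cancel _ u)
  all_goals
    intro u hu
    simp only [mem_filter, mem_univ, true_and] at hu ⊢
    obtain ⟨⟨hwu, hdw⟩, huv, hdv⟩ := hu
    obtain hvw | hu := lev_eq_or_forall_eq_or_eq hwu huv (by omega)
    · exact (hlev fun i => (hvw i).symm).elim
    have := distO_sub_add_distO hu
    exact ⟨⟨adj_of_sub_eq_sub (by abel) huv, by omega⟩, adj_of_sub_eq_sub (by abel) hwu, by omega⟩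

/-- the commutator `C = A₋A₊ - A₊A₋` on `C_m^N` (`m ≥ 3`) is supported
on pairs of vertices with equal level vectors. -/
theorem commutator_equal_level_vectors (N m : ℕ) [NeZero m] (hN : 1 ≤ N) (hm : 3 ≤ m)
    (v w : Fin N → ZMod m)
    (h : Aminus N m (Aplus N m (indV N m v)) w
        - Aplus N m (Aminus N m (indV N m v)) w ≠ 0) :
    ∀ k : Fin N, lev N m w k = lev N m v k :=
  commutator_equal_level_vectors_general N m v w h
end

section
/- Let m = 3 and r ∈ ℕ. If f is a vertex function on C_3^N supported in Σ_r (that is, f(v) = 0 whenever d(v) ≠ r), then for every vertex v, (A_-(A_+ f))(v) − (A_+(A_- f))(v) = (2N − 3r) · f(v) − (A_0 f)(v); in other words, C f = (2N − 3r) • f − A_0 f, so C + A_0 acts diagonally on functions supported in Σ_r. -/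
open Finset

/-!
On `C_3^N` every level is `0` or `1`, so `d(v)` is the number of nonzero coordinates, and the
neighbours of `v` are the vertices `v[k := a]` with `a ≠ v k`. Thus `A₊` sets a nonzero coordinate
to `0`, `A₋` sets a zero coordinate to `1` or `2`, and `A₀` negates a nonzero coordinate.
In `A₋ A₊` and `A₊ A₋` the two-step paths that change two distinct coordinates cancel each other.
What remains of `A₋ A₊` are the `2 (N - d(v))` paths back to `v`; what remains of `A₊ A₋` are the
paths through `v[j := 0]` for `v j ≠ 0`, which end either at `v` or at `v[j := -v j]`, contributing
`d(v) f(v) + A₀ f(v)`. Hence `C f (v) = (2N - 3 d(v)) f(v) - A₀ f(v)` for every `f`.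
-/

open Function

lemma Function.update_injOn_sigma {ι β : Type*} [DecidableEq ι] (v : ι → β) :
    Set.InjOn (fun x : Σ _ : ι, β => update v x.1 x.2) {x | x.2 ≠ v x.1} := by
  rintro ⟨k, a⟩ ha ⟨k', a'⟩ - h
  obtain rfl : k = k' := by
    by_contra hne
    exact ha (by simpa [update_of_ne hne] using congrFun h k)
  simpa using congrFun h k

section General

variable {N m : ℕ}

lemma add_eV (v : Fin N → ZMod m) (k : Fin N) : v + eV N m k = update v k (v k + 1) := by
  ext j
  by_cases h : j = k <;> simp [eV, h]

lemma sub_eV (v : Fin N → ZMod m) (k : Fin N) : v - eV N m k = update v k (v k - 1) := by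
  ext j
  by_cases h : j = k <;> simp [eV, h]

lemma adj_iff_update {v w : Fin N → ZMod m} :
    adj N m v w ↔ ∃ k, w = update v k (v k + 1) ∨ w = update v k (v k - 1) := by
  simp only [adj, add_eV, sub_eV]

lemma distO_update_add_lev (v : Fin N → ZMod m) (k : Fin N) (a : ZMod m) :
    distO N m (update v k a) + lev N m v k = distO N m v + lev N m (update v k a) k := by
  unfold distO
  rw [← add_sum_erase _ _ (mem_univ k), ← add_sum_erase univ (lev N m v) (mem_univ k)]
  have : ∑ j ∈ univ.erase k, lev N m (update v k a) j = ∑ j ∈ univ.erase k, lev N m v j :=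
    sum_congr rfl fun j hj => by simp [lev, update_of_ne (ne_of_mem_erase hj)]
  omega

end General

section Three

variable {N : ℕ}

lemma lev_three (v : Fin N → ZMod 3) (k : Fin N) :
    lev N 3 v k = if v k ≠ 0 then 1 else 0 := by
  have : ∀ a : ZMod 3, min a.val (3 - a.val) = if a ≠ 0 then 1 else 0 := by decide
  exact this (v k)

lemma distO_three (v : Fin N → ZMod 3) : distO N 3 v = #{k | v k ≠ 0} := by
  simp only [distO, lev_three, sum_boole, Nat.cast_id]

lemma adj_three_iff {v w : Fin N → ZMod 3} : adj N 3 v w ↔ ∃ k, ∃ a ≠ v k, w = update v k a := by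
  have hne : ∀ a x : ZMod 3, a ≠ x ↔ a = x + 1 ∨ a = x - 1 := by decide
  simp [adj_iff_update, hne, or_and_right, exists_or]

open Classical in
lemma sum_filter_adj_three (v : Fin N → ZMod 3) (g : (Fin N → ZMod 3) → ℂ) :
    ∑ w ∈ univ.filter (adj N 3 v), g w = ∑ k, ∑ a ∈ univ.erase (v k), g (update v k a) := by
  rw [sum_sigma']
  symm
  refine sum_nbij (fun x => update v x.1 x.2) ?_ ?_ ?_ (fun _ _ => rfl)
  · simp only [mem_sigma, mem_filter, mem_univ, true_and, mem_erase]
    exact fun x hx => adj_three_iff.2 ⟨x.1, x.2, hx.1, rfl⟩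
  · exact (update_injOn_sigma v).mono fun x hx => by simpa using hx
  · intro w hw
    obtain ⟨k, a, ha, rfl⟩ := adj_three_iff.1 (mem_filter.1 hw).2
    exact ⟨⟨k, a⟩, by simpa using ha, rfl⟩

open Classical in
lemma sum_adj_and_three (v : Fin N → ZMod 3) (p : (Fin N → ZMod 3) → Prop) [DecidablePred p]
    (g : (Fin N → ZMod 3) → ℂ) :
    ∑ w, (if adj N 3 v w ∧ p w then g w else 0)
      = ∑ k, ∑ a ∈ (univ.erase (v k)).filter (fun a => p (update v k a)), g (update v k a) := by
  simp only [sum_filter]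
  rw [← sum_filter_adj_three v fun w => if p w then g w else 0, sum_filter]
  simp only [ite_and]

lemma distO_update_three (v : Fin N → ZMod 3) (k : Fin N) (a : ZMod 3) :
    distO N 3 (update v k a) + (if v k ≠ 0 then 1 else 0)
      = distO N 3 v + (if a ≠ 0 then 1 else 0) := by
  simpa [lev_three] using distO_update_add_lev v k a

lemma distO_update_lt_three (v : Fin N → ZMod 3) (k : Fin N) (a : ZMod 3) :
    distO N 3 (update v k a) < distO N 3 v ↔ a = 0 ∧ v k ≠ 0 := by
  have := distO_update_three v k a
  by_cases ha : a = 0 <;> by_cases hv : v k = 0 <;> simp [ha, hv] at this ⊢ <;> omega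

lemma distO_lt_update_three (v : Fin N → ZMod 3) (k : Fin N) (a : ZMod 3) :
    distO N 3 v < distO N 3 (update v k a) ↔ v k = 0 ∧ a ≠ 0 := by
  have := distO_update_three v k a
  by_cases ha : a = 0 <;> by_cases hv : v k = 0 <;> simp [ha, hv] at this ⊢ <;> omega

lemma distO_update_eq_three (v : Fin N → ZMod 3) (k : Fin N) (a : ZMod 3) :
    distO N 3 (update v k a) = distO N 3 v ↔ (a = 0 ↔ v k = 0) := by
  have := distO_update_three v k a
  by_cases ha : a = 0 <;> by_cases hv : v k = 0 <;> simp [ha, hv] at this ⊢ <;> omega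

open Classical in
lemma Aplus_three (f : (Fin N → ZMod 3) → ℂ) (v : Fin N → ZMod 3) :
    Aplus N 3 f v = ∑ k ∈ univ.filter (v · ≠ 0), f (update v k 0) := by
  have hvalues : ∀ x : ZMod 3,
      (univ.erase x).filter (fun a => a = 0 ∧ x ≠ 0) = if x ≠ 0 then {0} else ∅ := by decide
  rw [Aplus, sum_adj_and_three]
  simp only [distO_update_lt_three, hvalues, sum_filter]
  refine sum_congr rfl fun k _ => ?_
  split_ifs <;> simp

open Classical in
lemma Aminus_three (f : (Fin N → ZMod 3) → ℂ) (v : Fin N → ZMod 3) :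
    Aminus N 3 f v = ∑ k ∈ univ.filter (v · = 0), (f (update v k 1) + f (update v k 2)) := by
  have hvalues : ∀ x : ZMod 3,
      (univ.erase x).filter (fun a => x = 0 ∧ a ≠ 0) = if x = 0 then {1, 2} else ∅ := by decide
  rw [Aminus, sum_adj_and_three]
  simp only [distO_lt_update_three, hvalues, sum_filter]
  refine sum_congr rfl fun k _ => ?_
  split_ifs
  exacts [sum_pair (by decide), sum_empty]

open Classical in
lemma Azero_three (f : (Fin N → ZMod 3) → ℂ) (v : Fin N → ZMod 3) :
    Azero N 3 f v = ∑ k ∈ univ.filter (v · ≠ 0), f (update v k (-v k)) := by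
  have hvalues : ∀ x : ZMod 3,
      (univ.erase x).filter (fun a => (a = 0 ↔ x = 0)) = if x ≠ 0 then {-x} else ∅ := by decide
  rw [Azero, sum_adj_and_three]
  simp only [distO_update_eq_three, hvalues, sum_filter]
  refine sum_congr rfl fun k _ => ?_
  split_ifs <;> simp

lemma add_eq_add_neg_of_ne_zero_three (g : ZMod 3 → ℂ) {x : ZMod 3} (hx : x ≠ 0) :
    g 1 + g 2 = g x + g (-x) := by
  obtain ⟨rfl, h⟩ | ⟨rfl, h⟩ : x = 1 ∧ -x = 2 ∨ x = 2 ∧ -x = 1 := by revert x; decide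
  · rw [h]
  · rw [h, add_comm]

lemma Aplus_update_of_eq_zero (f : (Fin N → ZMod 3) → ℂ) (v : Fin N → ZMod 3) {k : Fin N}
    (hvk : v k = 0) {ε : ZMod 3} (hε : ε ≠ 0) :
    Aplus N 3 f (update v k ε)
      = f v + ∑ j ∈ univ.filter (v · ≠ 0), f (update (update v k ε) j 0) := by
  have hsupp : univ.filter (update v k ε · ≠ 0) = insert k (univ.filter (v · ≠ 0)) := by
    ext j
    by_cases h : j = k <;> simp [h, hε]
  rw [Aplus_three, hsupp, sum_insert (by simp [hvk]), update_idem, update_eq_self_iff.2 hvk.symm]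

lemma Aminus_update_of_ne_zero (f : (Fin N → ZMod 3) → ℂ) (v : Fin N → ZMod 3) {j : Fin N}
    (hvj : v j ≠ 0) :
    Aminus N 3 f (update v j 0)
      = f v + f (update v j (-v j)) + ∑ k ∈ univ.filter (v · = 0),
          (f (update (update v j 0) k 1) + f (update (update v j 0) k 2)) := by
  have hzeros : univ.filter (update v j 0 · = 0) = insert j (univ.filter (v · = 0)) := by
    ext k
    by_cases h : k = j <;> simp [h]
  rw [Aminus_three, hzeros, sum_insert (by simp [hvj]), update_idem, update_idem,
    add_eq_add_neg_of_ne_zero_three (fun a => f (update v j a)) hvj, update_eq_self]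

lemma commutator_three (f : (Fin N → ZMod 3) → ℂ) (v : Fin N → ZMod 3) :
    Aminus N 3 (Aplus N 3 f) v - Aplus N 3 (Aminus N 3 f) v
      = (2 * (N : ℂ) - 3 * (distO N 3 v : ℂ)) * f v - Azero N 3 f v := by
  set Z := univ.filter (v · = 0)
  set T := univ.filter (v · ≠ 0)
  set cross : Fin N → Fin N → ℂ := fun k j =>
    f (update (update v k 1) j 0) + f (update (update v k 2) j 0)
  have hminus_plus : Aminus N 3 (Aplus N 3 f) v = ∑ k ∈ Z, (2 * f v + ∑ j ∈ T, cross k j) := by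
    refine (Aminus_three _ v).trans (sum_congr rfl fun k hk => ?_)
    have hvk : v k = 0 := (mem_filter.1 hk).2
    rw [Aplus_update_of_eq_zero f v hvk one_ne_zero,
      Aplus_update_of_eq_zero f v hvk (by decide : (2 : ZMod 3) ≠ 0), sum_add_distrib]
    ring
  have hplus_minus : Aplus N 3 (Aminus N 3 f) v
      = ∑ j ∈ T, (f v + f (update v j (-v j)) + ∑ k ∈ Z, cross k j) := by
    refine (Aplus_three _ v).trans (sum_congr rfl fun j hj => ?_)
    have hvj : v j ≠ 0 := (mem_filter.1 hj).2
    rw [Aminus_update_of_ne_zero f v hvj]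
    refine congrArg _ (sum_congr rfl fun k hk => ?_)
    have hkj : k ≠ j := fun h => hvj (h ▸ (mem_filter.1 hk).2)
    rw [update_comm hkj.symm, update_comm hkj.symm]
  have hcard : (#Z : ℂ) + #T = N := by
    exact_mod_cast (card_filter_add_card_filter_not (s := univ) (v · = 0)).trans (card_fin N)
  rw [hminus_plus, hplus_minus, distO_three, Azero_three]
  simp only [sum_add_distrib, sum_const, nsmul_eq_mul, sum_comm (s := Z) (t := T)]
  linear_combination 2 * f v * hcard

end Three

theorem commutator_C3_general (N r : ℕ)
    (f : (Fin N → ZMod 3) → ℂ)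
    (hf : ∀ v, distO N 3 v ≠ r → f v = 0) :
    ∀ v, Aminus N 3 (Aplus N 3 f) v - Aplus N 3 (Aminus N 3 f) v
      = (2 * (N : ℂ) - 3 * (r : ℂ)) * f v - Azero N 3 f v := by
  intro v
  rw [commutator_three]
  by_cases hv : distO N 3 v = r
  · rw [hv]
  · rw [hf v hv, mul_zero, mul_zero]

/-- on `C_3^N`, for `f` supported in `Σ_r`,
`C f = (2N - 3r) • f - A₀ f`. -/
theorem commutator_C3 (N r : ℕ) (hN : 1 ≤ N)
    (f : (Fin N → ZMod 3) → ℂ)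
    (hf : ∀ v, distO N 3 v ≠ r → f v = 0) :
    ∀ v, Aminus N 3 (Aplus N 3 f) v - Aplus N 3 (Aminus N 3 f) v
      = (2 * (N : ℂ) - 3 * (r : ℂ)) * f v - Azero N 3 f v :=
  commutator_C3_general N r f hf
end

section
/- Let m = 3, let r ∈ ℕ with r ≤ N, and let s ≤ r. Let f be a vertex function on C_3^N supported in Σ_r, and suppose that for every vertex v with d(v) = r there exists a set S_v ⊆ {k : d_k(v) = 1} with |S_v| = s such that f(ṽ_k) = f(v) for every k ∈ S_v and f(ṽ_k) = −f(v) for every k ∈ {k : d_k(v) = 1} \ S_v. Then f is an eigenvector of the neutral adjacency: A_0 f = (2s − r) • f. -/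
open Finset

/-! On `C_3^N` every coordinate has level `0` or `1`, so `d(v)` counts the nonzero coordinates
of `v`, and a step `v ↦ v ± e_k` keeps `d` fixed exactly when it moves `v k` from `1` to `2`
or back, i.e. when it is the reflection `ṽ_k` at a level-one coordinate. Hence
`(A₀ f)(v) = Σ_{k : d_k(v) = 1} f(ṽ_k)`, and the sign pattern of `f` makes this
`s f(v) - (r - s) f(v)`. -/

def cyclicLevel (m : ℕ) (a : ZMod m) : ℕ :=
  min a.val (m - a.val)

section AnyModulus

variable {N m : ℕ}

theorem lev_eq_cyclicLevel (v : Fin N → ZMod m) (k : Fin N) :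
    lev N m v k = cyclicLevel m (v k) :=
  rfl

theorem cyclicLevel_neg [NeZero m] (a : ZMod m) : cyclicLevel m (-a) = cyclicLevel m a := by
  have ha := ZMod.val_lt a
  unfold cyclicLevel
  rw [ZMod.neg_val]
  split_ifs with h0
  · simp [h0]
  · omega

theorem distO_update_eq_iff (v : Fin N → ZMod m) (k : Fin N) (b : ZMod m) :
    distO N m (Function.update v k b) = distO N m v ↔ cyclicLevel m b = cyclicLevel m (v k) := by
  unfold distO
  rw [Finset.sum_eq_sum_iff_single (Finset.mem_univ k)
    fun j _ hj => by rw [lev_eq_cyclicLevel, Function.update_of_ne hj, lev_eq_cyclicLevel]]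
  simp [lev_eq_cyclicLevel]

theorem distO_reflV [NeZero m] (k : Fin N) (v : Fin N → ZMod m) :
    distO N m (reflV N m k v) = distO N m v :=
  (distO_update_eq_iff v k _).2 (cyclicLevel_neg _)

theorem adj_iff (v w : Fin N → ZMod m) :
    adj N m v w ↔ ∃ k, ∃ d : ZMod m, (d = 1 ∨ d = -1) ∧ w = Function.update v k (v k + d) := by
  have hstep : ∀ k (d : ZMod m), v + d • eV N m k = Function.update v k (v k + d) := by
    intro k d
    funext j
    by_cases hj : j = k
    · subst hj; simp [eV]
    · simp [eV, hj]
  constructor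
  · rintro ⟨k, rfl | rfl⟩
    · exact ⟨k, 1, .inl rfl, by rw [← hstep, one_smul]⟩
    · exact ⟨k, -1, .inr rfl, by rw [← hstep, neg_one_smul, sub_eq_add_neg]⟩
  · rintro ⟨k, d, rfl | rfl, rfl⟩
    · exact ⟨k, .inl (by rw [← hstep, one_smul])⟩
    · exact ⟨k, .inr (by rw [← hstep, neg_one_smul, sub_eq_add_neg])⟩

theorem R1_eq_of_signs (f : (Fin N → ZMod m) → ℂ) (v : Fin N → ZMod m) {S : Finset (Fin N)}
    (hS : S ⊆ Finset.univ.filter (fun k => lev N m v k = 1))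
    (hpos : ∀ k ∈ S, f (reflV N m k v) = f v)
    (hneg : ∀ k ∈ Finset.univ.filter (fun k => lev N m v k = 1) \ S,
      f (reflV N m k v) = - f v) :
    R1 N m f v = (2 * (S.card : ℂ) - cardLev N m v 1) * f v := by
  have hcard := congrArg (Nat.cast : ℕ → ℂ) (Finset.card_sdiff_add_card_eq_card hS)
  unfold R1
  rw [← Finset.sum_sdiff hS, Finset.sum_congr rfl hneg, Finset.sum_congr rfl hpos,
    Finset.sum_const, Finset.sum_const, nsmul_eq_mul, nsmul_eq_mul, cardLev, ← hcard]
  push_cast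
  ring

end AnyModulus

section Three

variable {N : ℕ}

theorem cyclicLevel_three_eq_one_iff (a : ZMod 3) : cyclicLevel 3 a = 1 ↔ a ≠ 0 := by
  revert a; decide

theorem cyclicLevel_three_le_one (a : ZMod 3) : cyclicLevel 3 a ≤ 1 := by
  revert a; decide

theorem cyclicLevel_three_add_eq_iff {a d : ZMod 3} (hd : d = 1 ∨ d = -1) :
    cyclicLevel 3 (a + d) = cyclicLevel 3 a ↔ a ≠ 0 ∧ a + d = -a := by
  revert a d; decide

theorem neutral_adj_three_iff (v w : Fin N → ZMod 3) :
    adj N 3 v w ∧ distO N 3 w = distO N 3 v ↔ ∃ k, lev N 3 v k = 1 ∧ w = reflV N 3 k v := by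
  simp only [lev_eq_cyclicLevel, cyclicLevel_three_eq_one_iff]
  constructor
  · rintro ⟨hvw, hd⟩
    obtain ⟨k, d, hd1, rfl⟩ := (adj_iff v w).1 hvw
    obtain ⟨hvk, hrefl⟩ :=
      (cyclicLevel_three_add_eq_iff hd1).1 ((distO_update_eq_iff v k _).1 hd)
    exact ⟨k, hvk, by rw [hrefl, reflV]⟩
  · rintro ⟨k, hvk, rfl⟩
    refine ⟨(adj_iff v _).2 ?_, distO_reflV k v⟩
    have hunit : v k = 1 ∨ v k = -1 := by revert hvk; generalize v k = a; revert a; decide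
    refine ⟨k, v k, hunit, ?_⟩
    rw [reflV]
    congr 1
    generalize v k = a; revert a; decide

theorem reflV_three_injOn (v : Fin N → ZMod 3) :
    Set.InjOn (fun k => reflV N 3 k v) {k | lev N 3 v k = 1} := by
  intro k hk k' _ h
  by_contra hne
  have hk_val := congrFun h k
  simp only [reflV, Function.update_self, Function.update_of_ne hne] at hk_val
  have hv0 : v k ≠ 0 := (cyclicLevel_three_eq_one_iff _).1 hk
  revert hk_val hv0; generalize v k = a; revert a; decide

theorem Azero_three_eq_R1 (f : (Fin N → ZMod 3) → ℂ) : Azero N 3 f = R1 N 3 f := by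
  classical
  funext v
  have hnbrs : Finset.univ.filter (fun w => adj N 3 v w ∧ distO N 3 w = distO N 3 v)
      = (Finset.univ.filter (fun k => lev N 3 v k = 1)).image (fun k => reflV N 3 k v) := by
    ext w
    simp only [Finset.mem_filter, Finset.mem_univ, true_and, Finset.mem_image,
      neutral_adj_three_iff]
    exact exists_congr fun k => and_congr_right' eq_comm
  rw [Azero, ← Finset.sum_filter, hnbrs, Finset.sum_image]
  · rfl
  · intro k hk k' hk' h
    exact reflV_three_injOn v (Finset.mem_filter.1 hk).2 (Finset.mem_filter.1 hk').2 h

theorem distO_three_eq_cardLev (v : Fin N → ZMod 3) : distO N 3 v = cardLev N 3 v 1 := by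
  rw [cardLev, Finset.card_filter, distO]
  refine Finset.sum_congr rfl fun k _ => ?_
  have := cyclicLevel_three_le_one (v k)
  rw [lev_eq_cyclicLevel]
  split_ifs <;> omega

end Three

theorem neutral_eigenvector_C3_general (N r s : ℕ)
    (f : (Fin N → ZMod 3) → ℂ)
    (hf : ∀ v, distO N 3 v ≠ r → f v = 0)
    (hsym : ∀ v : Fin N → ZMod 3, distO N 3 v = r →
      ∃ S : Finset (Fin N),
        S ⊆ Finset.univ.filter (fun k => lev N 3 v k = 1) ∧
        S.card = s ∧
        (∀ k ∈ S, f (reflV N 3 k v) = f v) ∧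
        (∀ k ∈ Finset.univ.filter (fun k => lev N 3 v k = 1) \ S,
          f (reflV N 3 k v) = - f v)) :
    ∀ v, Azero N 3 f v = (2 * (s : ℂ) - (r : ℂ)) * f v := by
  intro v
  rw [Azero_three_eq_R1]
  by_cases hv : distO N 3 v = r
  · obtain ⟨S, hS, rfl, hpos, hneg⟩ := hsym v hv
    rw [R1_eq_of_signs f v hS hpos hneg, ← distO_three_eq_cardLev, hv]
  · rw [hf v hv, mul_zero]
    exact Finset.sum_eq_zero fun k _ => hf _ (by rwa [distO_reflV])

/-- on `C_3^N`, if `f` is supported in `Σ_r` and at each vertex is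
symmetric in `s` of the level-one coordinates and antisymmetric in the remaining
`r - s` ones, then `A₀ f = (2s - r) • f`. -/
theorem neutral_eigenvector_C3 (N r s : ℕ) (hN : 1 ≤ N) (hrN : r ≤ N) (hsr : s ≤ r)
    (f : (Fin N → ZMod 3) → ℂ)
    (hf : ∀ v, distO N 3 v ≠ r → f v = 0)
    (hsym : ∀ v : Fin N → ZMod 3, distO N 3 v = r →
      ∃ S : Finset (Fin N),
        S ⊆ Finset.univ.filter (fun k => lev N 3 v k = 1) ∧
        S.card = s ∧
        (∀ k ∈ S, f (reflV N 3 k v) = f v) ∧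
        (∀ k ∈ Finset.univ.filter (fun k => lev N 3 v k = 1) \ S,
          f (reflV N 3 k v) = - f v)) :
    ∀ v, Azero N 3 f v = (2 * (s : ℂ) - (r : ℂ)) * f v :=
  neutral_eigenvector_C3_general N r s f hf hsym
end

section
/- Let m = 4 and r ∈ ℕ. If f is a vertex function on C_4^N supported in Σ_r (that is, f(v) = 0 whenever d(v) ≠ r), then C f = 2(N − r) • f; that is, for every vertex v, (A_-(A_+ f))(v) − (A_+(A_- f))(v) = 2(N − r) f(v). -/
open Finset

/-! Every step of `C_4^N` changes one coordinate, and `d` is the sum of the levels of the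
coordinates, so `A₊` and `A₋` split as sums over `k` of operators that only move coordinate `k`.
Operators moving different coordinates commute, hence `C` is the sum over `k` of the commutators
of the one-coordinate operators. On the 4-cycle such a commutator is multiplication by
`2 - 2 d_k(v)`, and summing over `k` gives `2 (N - d(v))`. -/

open Function

namespace CayleyTorus

variable {N m : ℕ}

def cycLevel (m : ℕ) (a : ZMod m) : ℕ := min a.val (m - a.val)

lemma lev_eq_cycLevel (v : Fin N → ZMod m) (k : Fin N) : lev N m v k = cycLevel m (v k) := rfl

lemma distO_update_add (v : Fin N → ZMod m) (k : Fin N) (b : ZMod m) :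
    distO N m (update v k b) + cycLevel m (v k) = distO N m v + cycLevel m b := by
  have hlev : lev N m (update v k b) = update (lev N m v) k (cycLevel m b) := by
    funext j
    exact apply_update (fun _ a => cycLevel m a) v k b j
  rw [distO, distO, hlev, sum_update_of_mem (mem_univ k),
    ← add_sum_erase _ _ (mem_univ k), sdiff_singleton_eq_erase]
  simp only [lev_eq_cycLevel]
  ring

lemma eq_and_eq_of_update_add_eq {v : Fin N → ZMod m} {j k : Fin N} {s t : ZMod m}
    (hs : s ≠ 0) (h : update v j (v j + s) = update v k (v k + t)) : j = k ∧ s = t := by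
  by_cases hjk : j = k
  · subst hjk
    exact ⟨rfl, by simpa using congrFun h j⟩
  · have := congrFun h j
    simp [update_of_ne hjk, hs] at this

lemma adj_iff_exists_update {v w : Fin N → ZMod m} :
    adj N m v w ↔ ∃ k, ∃ s ∈ ({1, -1} : Finset (ZMod m)), w = update v k (v k + s) := by
  have hstep : ∀ k (s : ZMod m), v + s • eV N m k = update v k (v k + s) := by
    intro k s
    funext j
    by_cases hjk : j = k
    · subst hjk; simp [eV]
    · simp [eV, hjk]
  simp only [adj, mem_insert, mem_singleton, exists_eq_or_imp, exists_eq_left, ← hstep,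
    one_smul, neg_smul, ← sub_eq_add_neg, exists_or]

open Classical in
lemma sum_ite_adj [NeZero m] (hm : 2 < m) (g : (Fin N → ZMod m) → ℂ) (v : Fin N → ZMod m) :
    ∑ w, (if adj N m v w then g w else 0)
      = ∑ k, ∑ s ∈ ({1, -1} : Finset (ZMod m)), g (update v k (v k + s)) := by
  have : Fact (1 < m) := ⟨by omega⟩
  have hinj : Set.InjOn (fun p : Fin N × ZMod m => update v p.1 (v p.1 + p.2))
      (univ ×ˢ ({1, -1} : Finset (ZMod m)) : Finset (Fin N × ZMod m)) := by
    rintro ⟨j, s⟩ hs ⟨k, t⟩ - h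
    have hs0 : s ≠ 0 := by
      obtain rfl | rfl : s = 1 ∨ s = -1 := by simpa using hs
      all_goals simp
    obtain ⟨rfl, rfl⟩ := eq_and_eq_of_update_add_eq hs0 h
    rfl
  rw [← sum_filter, ← sum_product', ← sum_image (f := g) hinj]
  congr 1
  ext w
  simp [adj_iff_exists_update, eq_comm]

noncomputable def cycOp (R : ℕ → ℕ → Prop) [DecidableRel R] (F : ZMod m → ℂ) (a : ZMod m) : ℂ :=
  ∑ s ∈ ({1, -1} : Finset (ZMod m)), if R (cycLevel m a) (cycLevel m (a + s)) then F (a + s) else 0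

noncomputable def coordOp (R : ℕ → ℕ → Prop) [DecidableRel R] (k : Fin N)
    (f : (Fin N → ZMod m) → ℂ) (v : Fin N → ZMod m) : ℂ :=
  cycOp R (fun b => f (update v k b)) (v k)

lemma distO_update_lt_iff (v : Fin N → ZMod m) (k : Fin N) (b : ZMod m) :
    distO N m (update v k b) < distO N m v ↔ cycLevel m b < cycLevel m (v k) := by
  have := distO_update_add v k b
  omega

lemma lt_distO_update_iff (v : Fin N → ZMod m) (k : Fin N) (b : ZMod m) :
    distO N m v < distO N m (update v k b) ↔ cycLevel m (v k) < cycLevel m b := by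
  have := distO_update_add v k b
  omega

lemma Aplus_apply [NeZero m] (hm : 2 < m) (f : (Fin N → ZMod m) → ℂ) (v : Fin N → ZMod m) :
    Aplus N m f v = ∑ k, coordOp (· > ·) k f v := by
  simp only [Aplus, ite_and, sum_ite_adj hm, distO_update_lt_iff, coordOp, cycOp]

lemma Aminus_apply [NeZero m] (hm : 2 < m) (f : (Fin N → ZMod m) → ℂ) (v : Fin N → ZMod m) :
    Aminus N m f v = ∑ k, coordOp (· < ·) k f v := by
  simp only [Aminus, ite_and, sum_ite_adj hm, lt_distO_update_iff, coordOp, cycOp]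

section StepRelation

variable (R R' : ℕ → ℕ → Prop) [DecidableRel R] [DecidableRel R']

lemma coordOp_sum {ι : Type*} (t : Finset ι) (k : Fin N) (g : ι → (Fin N → ZMod m) → ℂ)
    (v : Fin N → ZMod m) :
    coordOp R k (fun u => ∑ i ∈ t, g i u) v = ∑ i ∈ t, coordOp R k (g i) v := by
  simp only [coordOp, cycOp, ite_sum_zero]
  exact sum_comm

lemma coordOp_comm {j k : Fin N} (hjk : j ≠ k) (f : (Fin N → ZMod m) → ℂ)
    (v : Fin N → ZMod m) :
    coordOp R j (coordOp R' k f) v = coordOp R' k (coordOp R j f) v := by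
  simp only [coordOp, cycOp, update_of_ne hjk, update_of_ne hjk.symm,
    update_comm hjk, ite_sum_zero]
  rw [sum_comm]
  refine sum_congr rfl fun t _ => sum_congr rfl fun s _ => ?_
  simp only [← ite_and, and_comm]

lemma coordOp_coordOp_self (k : Fin N) (f : (Fin N → ZMod m) → ℂ) (v : Fin N → ZMod m) :
    coordOp R k (coordOp R' k f) v = cycOp R (cycOp R' fun b => f (update v k b)) (v k) := by
  simp only [coordOp, update_self, update_idem]

end StepRelation

lemma cycOp_commutator_four (F : ZMod 4 → ℂ) (a : ZMod 4) :
    cycOp (· < ·) (cycOp (· > ·) F) a - cycOp (· > ·) (cycOp (· < ·) F) a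
      = (2 - 2 * (cycLevel 4 a : ℂ)) * F a := by
  have h : (1 : ZMod 4) ≠ -1 := by decide
  have h0 : cycLevel 4 0 = 0 := rfl
  have h1 : cycLevel 4 1 = 1 := rfl
  have h2 : cycLevel 4 2 = 2 := rfl
  have h3 : cycLevel 4 3 = 1 := rfl
  obtain rfl | rfl | rfl | rfl : a = 0 ∨ a = 1 ∨ a = 2 ∨ a = 3 := by revert a; decide
  all_goals
    simp only [cycOp, sum_pair h]
    reduce_mod_char
    simp only [h0, h1, h2, h3]
    norm_num
    ring

lemma coordOp_commutator_four (k : Fin N) (f : (Fin N → ZMod 4) → ℂ) (v : Fin N → ZMod 4) :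
    coordOp (· < ·) k (coordOp (· > ·) k f) v - coordOp (· > ·) k (coordOp (· < ·) k f) v
      = (2 - 2 * (cycLevel 4 (v k) : ℂ)) * f v := by
  rw [coordOp_coordOp_self, coordOp_coordOp_self, cycOp_commutator_four, update_eq_self]

lemma Aminus_Aplus_sub_Aplus_Aminus_four (f : (Fin N → ZMod 4) → ℂ) (v : Fin N → ZMod 4) :
    Aminus N 4 (Aplus N 4 f) v - Aplus N 4 (Aminus N 4 f) v
      = 2 * ((N : ℂ) - distO N 4 v) * f v := by
  have hm : 2 < 4 := by norm_num
  have hAplus : Aplus N 4 f = fun u => ∑ k, coordOp (· > ·) k f u := funext (Aplus_apply hm f)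
  have hAminus : Aminus N 4 f = fun u => ∑ j, coordOp (· < ·) j f u := funext (Aminus_apply hm f)
  have hdiag : ∀ j, ∑ k, (coordOp (· < ·) j (coordOp (· > ·) k f) v
      - coordOp (· > ·) k (coordOp (· < ·) j f) v) = (2 - 2 * (cycLevel 4 (v j) : ℂ)) * f v := by
    intro j
    rw [sum_eq_single j (fun k _ hkj => sub_eq_zero.mpr (coordOp_comm _ _ hkj.symm f v))
      (by simp), coordOp_commutator_four]
  rw [Aminus_apply hm, hAplus, Aplus_apply hm, hAminus]
  simp only [coordOp_sum]
  rw [sum_comm (f := fun k j => coordOp (· > ·) k (coordOp (· < ·) j f) v), ← sum_sub_distrib]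
  simp only [← sum_sub_distrib, hdiag]
  rw [← sum_mul, sum_sub_distrib, sum_const, card_univ, Fintype.card_fin, ← mul_sum]
  simp only [distO, lev_eq_cycLevel, Nat.cast_sum]
  ring

end CayleyTorus

theorem commutator_C4_general (N r : ℕ)
    (f : (Fin N → ZMod 4) → ℂ)
    (hf : ∀ v, distO N 4 v ≠ r → f v = 0) :
    ∀ v, Aminus N 4 (Aplus N 4 f) v - Aplus N 4 (Aminus N 4 f) v
      = 2 * ((N : ℂ) - (r : ℂ)) * f v := by
  intro v
  rw [CayleyTorus.Aminus_Aplus_sub_Aplus_Aminus_four]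
  rcases eq_or_ne (distO N 4 v) r with hv | hv
  · rw [hv]
  · rw [hf v hv, mul_zero, mul_zero]

/-- on `C_4^N`, for `f` supported in `Σ_r`, `C f = 2(N - r) • f`. -/
theorem commutator_C4 (N r : ℕ) (hN : 1 ≤ N)
    (f : (Fin N → ZMod 4) → ℂ)
    (hf : ∀ v, distO N 4 v ≠ r → f v = 0) :
    ∀ v, Aminus N 4 (Aplus N 4 f) v - Aplus N 4 (Aminus N 4 f) v
      = 2 * ((N : ℂ) - (r : ℂ)) * f v :=
  commutator_C4_general N r f hf
end
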